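/- arXiv:2205.02677 — 2 statements merged into one kernel-verified Lean document; each statement's English description precedes it below -/
import Mathlib

section
/- Let g be a bounded integrable probability density on ℝ. Then for each fixed y ∈ ℝ, the limit as x → 0+ of ∫_ℝ g(ω)/((x + i y) − iω) dω equals π g(y) + i p.v.∫_ℝ g(ω+y)/ω dω, provided g is Hölder continuous. -/
open MeasureTheory Complex Filter

namespace Stmt5Aux

open Set

lemma oddIntegralZero (f : ℝ → ℝ) (S : Set ℝ) (hS : MeasurableSet S)
    (hsym : ∀ ω : ℝ, ω ∈ S ↔ -ω ∈ S) (hodd : ∀ ω, f (-ω) = - f ω) :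
    ∫ ω in S, f ω = 0 := by
  have h1 : ∫ ω in S, f ω = ∫ ω, S.indicator f ω := (integral_indicator hS).symm
  have h2 : ∀ ω, S.indicator f (-ω) = - S.indicator f ω := by
    intro ω
    by_cases h : ω ∈ S
    · rw [Set.indicator_of_mem ((hsym ω).mp h), Set.indicator_of_mem h, hodd]
    · rw [Set.indicator_of_notMem (fun hc => h ((hsym ω).mpr hc)),
        Set.indicator_of_notMem h, neg_zero]
  have h3 : ∫ ω, S.indicator f (-ω) = ∫ ω, S.indicator f ω := integral_neg_eq_self _ _
  have h4 : ∫ ω, S.indicator f (-ω) = - ∫ ω, S.indicator f ω := by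
    simp_rw [h2]; exact integral_neg _
  rw [h1]; linarith

lemma absRpowS {c r : ℝ} (hc : 0 < c) (hr : r < -1) :
    IntegrableOn (fun ω : ℝ => |ω| ^ r) {ω : ℝ | c < |ω|} ∧
      ∫ ω in {ω : ℝ | c < |ω|}, |ω| ^ r = 2 * (-c ^ (r + 1) / (r + 1)) := by
  have hSeq : {ω : ℝ | c < |ω|} = Ioi c ∪ Iio (-c) := by
    ext ω; simp only [mem_setOf_eq, lt_abs, mem_union, mem_Ioi, mem_Iio]
    constructor
    · rintro (h | h); exacts [Or.inl h, Or.inr (by linarith)]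
    · rintro (h | h); exacts [Or.inl h, Or.inr (by linarith)]
  have hIoi : IntegrableOn (fun ω : ℝ => |ω| ^ r) (Ioi c) :=
    (integrableOn_Ioi_rpow_of_lt hr hc).congr_fun
      (fun ω hω => by rw [abs_of_pos (hc.trans hω)]) measurableSet_Ioi
  have hIoiVal : ∫ ω in Ioi c, |ω| ^ r = -c ^ (r + 1) / (r + 1) := by
    rw [setIntegral_congr_fun measurableSet_Ioi
      (fun ω (hω : c < ω) => by rw [abs_of_pos (hc.trans hω)])]
    exact integral_Ioi_rpow_of_lt hr hc
  have hIio : IntegrableOn (fun ω : ℝ => |ω| ^ r) (Iio (-c)) := by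
    rw [show Iio (-c) = -(Ioi c) by simp, ← Measure.map_neg_eq_self (volume : Measure ℝ)]
    have m : MeasurableEmbedding fun x : ℝ => -x :=
      (Homeomorph.neg ℝ).measurableEmbedding
    rw [m.integrableOn_map_iff]
    simpa [Function.comp_def] using hIoi
  have hIioVal : ∫ ω in Iio (-c), |ω| ^ r = -c ^ (r + 1) / (r + 1) := by
    rw [setIntegral_congr_set Iio_ae_eq_Iic]
    have := integral_comp_neg_Iic (-c) (fun ω : ℝ => |ω| ^ r)
    simp only [abs_neg, neg_neg] at this
    rw [this]; exact hIoiVal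
  constructor
  · rw [hSeq]; exact hIoi.union hIio
  · rw [hSeq, setIntegral_union
      (((Set.Iio_disjoint_Ici (show -c ≤ c by linarith)).mono_right
        Set.Ioi_subset_Ici_self).symm) measurableSet_Iio hIoi hIio,
      hIoiVal, hIioVal]
    ring

lemma holderCont (g : ℝ → ℝ) (C α : ℝ) (hC0 : 0 ≤ C) (hα : 0 < α)
    (hHolder : ∀ s t : ℝ, |g s - g t| ≤ C * |s - t| ^ α) : Continuous g := by
  rw [Metric.continuous_iff]
  intro b ε hε
  have hC1 : (0:ℝ) < C + 1 := by linarith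
  refine ⟨(ε / (C + 1)) ^ α⁻¹, Real.rpow_pos_of_pos (div_pos hε hC1) _, fun a ha => ?_⟩
  have h1 : |a - b| ^ α ≤ ((ε / (C + 1)) ^ α⁻¹) ^ α := by
    apply Real.rpow_le_rpow (abs_nonneg _) _ hα.le
    rw [Real.dist_eq] at ha; exact ha.le
  have h2 : (((ε / (C + 1)) ^ α⁻¹ : ℝ)) ^ α = ε / (C + 1) :=
    Real.rpow_inv_rpow (le_of_lt (div_pos hε hC1)) hα.ne'
  calc dist (g a) (g b) = |g a - g b| := Real.dist_eq _ _
    _ ≤ C * |a - b| ^ α := hHolder a b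
    _ ≤ C * (ε / (C + 1)) := by
        rw [← h2]; exact mul_le_mul_of_nonneg_left h1 hC0
    _ < ε := by
        rw [mul_div_assoc', div_lt_iff₀ hC1]; nlinarith
lemma cplxSplit (x ω a : ℝ) (hx : 0 < x) :
    (a : ℂ) / ((x : ℂ) - Complex.I * ω)
      = ((a * (x / (x ^ 2 + ω ^ 2)) : ℝ) : ℂ)
        + Complex.I * ((a * (ω / (x ^ 2 + ω ^ 2)) : ℝ) : ℂ) := by
  have hne : (x : ℂ) - Complex.I * ω ≠ 0 := by
    intro hcon
    have := congrArg Complex.re hcon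
    simp [Complex.sub_re, Complex.mul_re] at this
    exact hx.ne' this
  have h2 : ((x : ℝ) ^ 2 + ω ^ 2 : ℝ) ≠ 0 := by positivity
  have h2' : ((x : ℂ) ^ 2 + (ω : ℂ) ^ 2) ≠ 0 := by exact_mod_cast Complex.ofReal_ne_zero.mpr h2
  push_cast
  rw [div_eq_iff hne]
  field_simp
  ring_nf
  simp [Complex.I_sq]

lemma realPart (h : ℝ → ℝ) (hcont : Continuous h)
    (M : ℝ) (hpos : ∀ ω, 0 ≤ h ω) (hbdd : ∀ ω, h ω ≤ M) :
    Tendsto (fun x : ℝ => ∫ ω : ℝ, h ω * (x / (x ^ 2 + ω ^ 2)))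
      (nhdsWithin 0 (Set.Ioi 0)) (nhds (Real.pi * h 0)) := by
  have hM0 : 0 ≤ M := le_trans (hpos 0) (hbdd 0)
  have hsub : ∀ x : ℝ, 0 < x →
      (∫ ω : ℝ, h ω * (x / (x ^ 2 + ω ^ 2)))
        = ∫ u : ℝ, h (x * u) * (1 / (1 + u ^ 2)) := by
    intro x hx
    have hcv := MeasureTheory.Measure.integral_comp_mul_left
      (fun ω : ℝ => h ω * (x / (x ^ 2 + ω ^ 2))) x
    have hpt : (fun u : ℝ => h (x * u) * (x / (x ^ 2 + (x * u) ^ 2)))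
        = fun u : ℝ => x⁻¹ * (h (x * u) * (1 / (1 + u ^ 2))) := by
      funext u
      have hd : x ^ 2 + (x * u) ^ 2 = x ^ 2 * (1 + u ^ 2) := by ring
      rw [hd]
      have h1 : (0:ℝ) < 1 + u ^ 2 := by positivity
      field_simp
    rw [hpt] at hcv
    rw [integral_const_mul, abs_of_pos (inv_pos.mpr hx), smul_eq_mul] at hcv
    have := congrArg (fun z => x * z) hcv
    rw [← mul_assoc, ← mul_assoc, mul_inv_cancel₀ hx.ne', one_mul, one_mul] at this
    exact this.symm
  have hlim : ∫ u : ℝ, h 0 * (1 / (1 + u ^ 2)) = Real.pi * h 0 := by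
    rw [integral_const_mul]
    simp_rw [one_div]
    rw [integral_univ_inv_one_add_sq]
    ring
  have hdct : Tendsto (fun x : ℝ => ∫ u : ℝ, h (x * u) * (1 / (1 + u ^ 2)))
      (nhdsWithin 0 (Set.Ioi 0)) (nhds (∫ u : ℝ, h 0 * (1 / (1 + u ^ 2)))) := by
    apply tendsto_integral_filter_of_dominated_convergence
      (bound := fun u : ℝ => M * (1 / (1 + u ^ 2)))
    · exact Eventually.of_forall fun x =>
        (Continuous.mul (hcont.comp (continuous_const.mul continuous_id))
          (continuous_const.div (by continuity) (fun u => by positivity))).aestronglyMeasurable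
    · refine Eventually.of_forall fun x => Eventually.of_forall fun u => ?_
      rw [norm_mul, Real.norm_eq_abs, Real.norm_eq_abs,
        _root_.abs_of_nonneg (hpos _),
        _root_.abs_of_nonneg (by positivity : (0:ℝ) ≤ 1 / (1 + u ^ 2))]
      exact mul_le_mul_of_nonneg_right (hbdd _) (by positivity)
    · simpa [one_div] using integrable_inv_one_add_sq.const_mul M
    · refine Eventually.of_forall fun u => ?_
      have h1 : Tendsto (fun x : ℝ => x * u) (nhdsWithin 0 (Set.Ioi 0)) (nhds 0) := by
        have : Tendsto (fun x : ℝ => x * u) (nhds 0) (nhds (0 * u)) :=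
          (continuous_id.mul continuous_const).tendsto 0
        rw [zero_mul] at this
        exact this.mono_left nhdsWithin_le_nhds
      exact ((hcont.tendsto 0).comp h1).mul_const _
  rw [← hlim]
  refine Tendsto.congr' ?_ hdct
  filter_upwards [self_mem_nhdsWithin] with x hx
  exact (hsub x hx).symm

set_option maxHeartbeats 1000000 in
lemma imagPart (h : ℝ → ℝ) (hcont : Continuous h) (hhint : Integrable h)
    (C α : ℝ) (hC0 : 0 ≤ C) (hα : 0 < α) (hα1 : α ≤ 1)
    (hH : ∀ ω : ℝ, |h ω - h 0| ≤ C * |ω| ^ α)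
    (P : ℝ)
    (hpv : Tendsto (fun ε : ℝ => ∫ ω in {ω : ℝ | ε < |ω|}, h ω / ω)
      (nhdsWithin 0 (Set.Ioi 0)) (nhds P)) :
    Tendsto (fun x : ℝ => ∫ ω : ℝ, h ω * (ω / (x ^ 2 + ω ^ 2)))
      (nhdsWithin 0 (Set.Ioi 0)) (nhds P) := by
  have key : ∀ x : ℝ, 0 < x →
      |(∫ ω : ℝ, h ω * (ω / (x ^ 2 + ω ^ 2))) - ∫ ω in {ω : ℝ | x < |ω|}, h ω / ω|
        ≤ C * x ^ α + 2 * C / (2 - α) * x ^ α := by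
    intro x hx
    set S : Set ℝ := {ω : ℝ | x < |ω|} with hSdef
    have hSmeas : MeasurableSet S :=
      (isOpen_lt continuous_const (continuous_abs : Continuous fun ω : ℝ => |ω|)).measurableSet
    have hScompl : Sᶜ = Icc (-x) x := by
      ext ω; simp [hSdef, not_lt, abs_le]
    have hwcont : Continuous (fun ω : ℝ => ω / (x ^ 2 + ω ^ 2)) :=
      continuous_id.div (by continuity) (fun ω => by positivity)
    have hwbound : ∀ ω : ℝ, |ω / (x ^ 2 + ω ^ 2)| ≤ (2 * x)⁻¹ := by
      intro ω
      have hpos2 : (0:ℝ) < x ^ 2 + ω ^ 2 := by positivity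
      rw [abs_div, abs_of_pos hpos2, div_le_iff₀ hpos2, inv_mul_eq_div,
        le_div_iff₀ (by positivity)]
      nlinarith [sq_nonneg (x - |ω|), _root_.sq_abs ω]
    have hint_hw : Integrable (fun ω : ℝ => h ω * (ω / (x ^ 2 + ω ^ 2))) := by
      have := Integrable.bdd_mul (c := (2 * x)⁻¹) hhint hwcont.aestronglyMeasurable
        (Eventually.of_forall fun ω => by rw [Real.norm_eq_abs]; exact hwbound ω)
      simpa [mul_comm] using this
    have hinv : IntegrableOn (fun ω : ℝ => h ω / ω) S := by
      have hb : ∀ᵐ ω ∂(volume.restrict S), ‖ω⁻¹‖ ≤ x⁻¹ := by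
        refine (ae_restrict_iff' hSmeas).mpr (Eventually.of_forall fun ω hω => ?_)
        rw [Real.norm_eq_abs, abs_inv]
        exact inv_anti₀ hx (le_of_lt hω)
      have := Integrable.bdd_mul (c := x⁻¹) (hhint.restrict (s := S))
        measurable_inv.aestronglyMeasurable hb
      exact this.congr (Eventually.of_forall fun ω => by
        simp [div_eq_mul_inv, mul_comm])
    obtain ⟨hint3, hval3⟩ := absRpowS hx (show (-3:ℝ) < -1 by norm_num)
    obtain ⟨hintα, hvalα⟩ := absRpowS hx (show α - 3 < -1 by linarith)
    set q : ℝ → ℝ := fun ω => x ^ 2 / (ω * (x ^ 2 + ω ^ 2)) with hqdef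
    have hqmeas : Measurable q := by
      apply Measurable.div measurable_const
      exact measurable_id.mul (by measurability)
    have hqodd : ∀ ω, q (-ω) = - q ω := by
      intro ω
      show x ^ 2 / (-ω * (x ^ 2 + (-ω) ^ 2)) = -(x ^ 2 / (ω * (x ^ 2 + ω ^ 2)))
      rw [show -ω * (x ^ 2 + (-ω) ^ 2) = -(ω * (x ^ 2 + ω ^ 2)) by ring, div_neg]
    have hωfacts : ∀ ω ∈ S, (0:ℝ) < |ω| ∧ ω ≠ 0 ∧ (0:ℝ) < ω ^ 2 := by
      intro ω hω
      have hω0 : (0:ℝ) < |ω| := lt_trans hx hω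
      have hωne : ω ≠ 0 := by
        intro hcon; rw [hcon] at hω0; simp at hω0
      have hω2 : (0:ℝ) < ω ^ 2 := by
        rw [← _root_.sq_abs]; exact pow_pos hω0 2
      exact ⟨hω0, hωne, hω2⟩
    have hqbound : ∀ ω ∈ S, |q ω| ≤ x ^ 2 * |ω| ^ (-3 : ℝ) := by
      intro ω hω
      obtain ⟨hω0, hωne, hω2⟩ := hωfacts ω hω
      have h1 : |q ω| = x ^ 2 / (|ω| * (x ^ 2 + ω ^ 2)) := by
        show |x ^ 2 / (ω * (x ^ 2 + ω ^ 2))| = _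
        rw [abs_div, abs_mul, abs_of_pos (show (0:ℝ) < x ^ 2 + ω ^ 2 by positivity),
          abs_of_pos (show (0:ℝ) < x ^ 2 by positivity)]
      rw [h1]
      have h2 : x ^ 2 / (|ω| * (x ^ 2 + ω ^ 2)) ≤ x ^ 2 / (|ω| * ω ^ 2) := by
        apply div_le_div_of_nonneg_left (by positivity) (mul_pos hω0 hω2)
        have : ω ^ 2 ≤ x ^ 2 + ω ^ 2 := by nlinarith [sq_nonneg x]
        exact mul_le_mul_of_nonneg_left this (abs_nonneg ω)
      refine h2.trans (le_of_eq ?_)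
      rw [Real.rpow_neg (abs_nonneg ω), show (3:ℝ) = ((3:ℕ):ℝ) by norm_num,
        Real.rpow_natCast, div_eq_mul_inv]
      congr 1
      rw [← _root_.sq_abs ω]; ring
    have hdbound : ∀ ω ∈ S, |(h ω - h 0) * q ω| ≤ C * x ^ 2 * |ω| ^ (α - 3) := by
      intro ω hω
      obtain ⟨hω0, hωne, hω2⟩ := hωfacts ω hω
      rw [abs_mul]
      calc |h ω - h 0| * |q ω| ≤ (C * |ω| ^ α) * (x ^ 2 * |ω| ^ (-3:ℝ)) :=
            mul_le_mul (hH ω) (hqbound ω hω) (abs_nonneg _) (by positivity)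
        _ = C * x ^ 2 * (|ω| ^ α * |ω| ^ (-3:ℝ)) := by ring
        _ = C * x ^ 2 * |ω| ^ (α - 3) := by
            rw [← Real.rpow_add hω0, show α + -3 = α - 3 by ring]
    have hqint : IntegrableOn q S := by
      refine Integrable.mono' (hint3.const_mul (x ^ 2)) hqmeas.aestronglyMeasurable ?_
      refine (ae_restrict_iff' hSmeas).mpr (Eventually.of_forall fun ω hω => ?_)
      rw [Real.norm_eq_abs]; exact hqbound ω hω
    have hdint : IntegrableOn (fun ω => (h ω - h 0) * q ω) S := by
      refine Integrable.mono' (hintα.const_mul (C * x ^ 2))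
        (((hcont.sub continuous_const).measurable.mul hqmeas).aestronglyMeasurable) ?_
      refine (ae_restrict_iff' hSmeas).mpr (Eventually.of_forall fun ω hω => ?_)
      rw [Real.norm_eq_abs]; exact hdbound ω hω
    have hsplit : (∫ ω : ℝ, h ω * (ω / (x ^ 2 + ω ^ 2)))
        = (∫ ω in S, h ω * (ω / (x ^ 2 + ω ^ 2)))
          + ∫ ω in Sᶜ, h ω * (ω / (x ^ 2 + ω ^ 2)) :=
      (integral_add_compl hSmeas hint_hw).symm
    have hBeq : (∫ ω in S, h ω * (ω / (x ^ 2 + ω ^ 2))) - (∫ ω in S, h ω / ω)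
        = - ∫ ω in S, (h ω - h 0) * q ω := by
      rw [← integral_sub (hint_hw.integrableOn) hinv]
      have hptw : ∀ ω ∈ S, h ω * (ω / (x ^ 2 + ω ^ 2)) - h ω / ω
          = -((h ω - h 0) * q ω) - h 0 * q ω := by
        intro ω hω
        obtain ⟨hω0, hωne, hω2⟩ := hωfacts ω hω
        have hden : x ^ 2 + ω ^ 2 ≠ 0 := by positivity
        show _ = -((h ω - h 0) * (x ^ 2 / (ω * (x ^ 2 + ω ^ 2))))
          - h 0 * (x ^ 2 / (ω * (x ^ 2 + ω ^ 2)))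
        field_simp
        ring
      rw [setIntegral_congr_fun hSmeas hptw]
      have hs1 : (∫ ω in S, (-((h ω - h 0) * q ω) - h 0 * q ω))
          = (∫ ω in S, -((h ω - h 0) * q ω)) - ∫ ω in S, h 0 * q ω :=
        integral_sub hdint.neg (hqint.const_mul (h 0))
      rw [hs1, integral_neg, integral_const_mul,
        oddIntegralZero q S hSmeas (fun ω => by simp [hSdef]) hqodd]
      ring
    have hBbound : |(∫ ω in S, h ω * (ω / (x ^ 2 + ω ^ 2))) - (∫ ω in S, h ω / ω)|
        ≤ 2 * C / (2 - α) * x ^ α := by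
      rw [hBeq, abs_neg, ← Real.norm_eq_abs]
      have h1 : ‖∫ ω in S, (h ω - h 0) * q ω‖ ≤ ∫ ω in S, C * x ^ 2 * |ω| ^ (α - 3) := by
        refine norm_integral_le_of_norm_le (hintα.const_mul (C * x ^ 2)) ?_
        refine (ae_restrict_iff' hSmeas).mpr (Eventually.of_forall fun ω hω => ?_)
        rw [Real.norm_eq_abs]; exact hdbound ω hω
      refine h1.trans (le_of_eq ?_)
      rw [integral_const_mul, hvalα]
      have h2α : (2:ℝ) - α ≠ 0 := by
        intro hcon; linarith
      have h2α' : α - 3 + 1 ≠ 0 := by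
        intro hcon; apply h2α; linarith
      have hxα : x ^ (α - 3 + 1) = x ^ α * x ^ (-2 : ℝ) := by
        rw [← Real.rpow_add hx, show α + -2 = α - 3 + 1 by ring]
      have hx2 : x ^ 2 * x ^ (-2 : ℝ) = 1 := by
        rw [← Real.rpow_natCast x 2, ← Real.rpow_add hx]
        norm_num
      calc C * x ^ 2 * (2 * (-x ^ (α - 3 + 1) / (α - 3 + 1)))
          = (2 * C / (2 - α)) * (x ^ 2 * x ^ (-2:ℝ)) * x ^ α := by
            rw [hxα]; field_simp; ring
        _ = 2 * C / (2 - α) * x ^ α := by rw [hx2]; ring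
    have hIccw : IntegrableOn (fun ω : ℝ => (h ω - h 0) * (ω / (x ^ 2 + ω ^ 2)))
        (Icc (-x) x) := ((hcont.sub continuous_const).mul hwcont).integrableOn_Icc
    have hIccw2 : IntegrableOn (fun ω : ℝ => h 0 * (ω / (x ^ 2 + ω ^ 2)))
        (Icc (-x) x) := (continuous_const.mul hwcont).integrableOn_Icc
    have hAeq : (∫ ω in Sᶜ, h ω * (ω / (x ^ 2 + ω ^ 2)))
        = ∫ ω in Icc (-x) x, (h ω - h 0) * (ω / (x ^ 2 + ω ^ 2)) := by
      rw [hScompl]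
      have hpt2 : ∀ ω ∈ Icc (-x) x, h ω * (ω / (x ^ 2 + ω ^ 2))
          = (h ω - h 0) * (ω / (x ^ 2 + ω ^ 2)) + h 0 * (ω / (x ^ 2 + ω ^ 2)) := by
        intro ω _; ring
      rw [setIntegral_congr_fun measurableSet_Icc hpt2, integral_add hIccw hIccw2,
        integral_const_mul,
        oddIntegralZero (fun a : ℝ => a / (x ^ 2 + a ^ 2)) (Icc (-x) x) measurableSet_Icc
          (fun ω => by
            rw [mem_Icc, mem_Icc]
            constructor <;> intro hm <;>
              exact ⟨by linarith [hm.1, hm.2], by linarith [hm.1, hm.2]⟩)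
          (fun ω => by
            show -ω / (x ^ 2 + (-ω) ^ 2) = -(ω / (x ^ 2 + ω ^ 2))
            rw [neg_sq, neg_div])]
      ring
    have hAbound : |∫ ω in Sᶜ, h ω * (ω / (x ^ 2 + ω ^ 2))| ≤ C * x ^ α := by
      rw [hAeq, ← Real.norm_eq_abs]
      have hb : ∀ ω ∈ Icc (-x) x, ‖(h ω - h 0) * (ω / (x ^ 2 + ω ^ 2))‖
          ≤ C * x ^ α * (2 * x)⁻¹ := by
        intro ω hω
        rw [Real.norm_eq_abs, abs_mul]
        have h1 : |h ω - h 0| ≤ C * x ^ α := by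
          refine (hH ω).trans ?_
          have : |ω| ^ α ≤ x ^ α :=
            Real.rpow_le_rpow (abs_nonneg ω) (abs_le.mpr ⟨hω.1, hω.2⟩) hα.le
          exact mul_le_mul_of_nonneg_left this hC0
        exact mul_le_mul h1 (hwbound ω) (abs_nonneg _) (by positivity)
      have hvol : volume (Icc (-x) x) < ⊤ := by
        rw [Real.volume_Icc]; exact ENNReal.ofReal_lt_top
      have hbnd := norm_setIntegral_le_of_norm_le_const hvol hb
      rw [measureReal_def] at hbnd
      refine hbnd.trans (le_of_eq ?_)
      rw [Real.volume_Icc, ENNReal.toReal_ofReal (by linarith : (0:ℝ) ≤ x - -x),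
        show x - -x = 2 * x by ring]
      field_simp
    rw [hsplit]
    have hre : (∫ ω in S, h ω * (ω / (x ^ 2 + ω ^ 2)))
        + (∫ ω in Sᶜ, h ω * (ω / (x ^ 2 + ω ^ 2))) - (∫ ω in S, h ω / ω)
        = (∫ ω in Sᶜ, h ω * (ω / (x ^ 2 + ω ^ 2)))
          + ((∫ ω in S, h ω * (ω / (x ^ 2 + ω ^ 2))) - (∫ ω in S, h ω / ω)) := by ring
    rw [hre]
    calc |(∫ ω in Sᶜ, h ω * (ω / (x ^ 2 + ω ^ 2)))
          + ((∫ ω in S, h ω * (ω / (x ^ 2 + ω ^ 2))) - (∫ ω in S, h ω / ω))|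
        ≤ |∫ ω in Sᶜ, h ω * (ω / (x ^ 2 + ω ^ 2))|
          + |(∫ ω in S, h ω * (ω / (x ^ 2 + ω ^ 2))) - (∫ ω in S, h ω / ω)| := abs_add_le _ _
      _ ≤ C * x ^ α + 2 * C / (2 - α) * x ^ α := add_le_add hAbound hBbound
  have hxα : Tendsto (fun x : ℝ => x ^ α) (nhdsWithin 0 (Set.Ioi 0)) (nhds 0) := by
    have := (Real.continuousAt_rpow_const 0 α (Or.inr hα.le)).tendsto
    rw [Real.zero_rpow hα.ne'] at this
    exact this.mono_left nhdsWithin_le_nhds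
  have hzero : Tendsto (fun x : ℝ =>
      (∫ ω : ℝ, h ω * (ω / (x ^ 2 + ω ^ 2))) - ∫ ω in {ω : ℝ | x < |ω|}, h ω / ω)
      (nhdsWithin 0 (Set.Ioi 0)) (nhds 0) := by
    apply squeeze_zero_norm' (a := fun x : ℝ => C * x ^ α + 2 * C / (2 - α) * x ^ α)
    · filter_upwards [self_mem_nhdsWithin] with x hx
      rw [Real.norm_eq_abs]
      exact key x hx
    · have := (hxα.const_mul C).add (hxα.const_mul (2 * C / (2 - α)))
      simpa using this
  have := hzero.add hpv
  simp only [sub_add_cancel, zero_add] at this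
  exact this

end Stmt5Aux

open Stmt5Aux

theorem stmt_5 (g : ℝ → ℝ) (hpos : ∀ ω, 0 ≤ g ω) (hint : Integrable g)
    (hprob : ∫ ω, g ω = 1) (M : ℝ) (hbdd : ∀ ω, g ω ≤ M)
    (C α : ℝ) (hα : 0 < α) (hα1 : α ≤ 1)
    (hHolder : ∀ s t : ℝ, |g s - g t| ≤ C * |s - t| ^ α)
    (y : ℝ) (P : ℝ)
    (hpv : Tendsto (fun ε : ℝ => ∫ ω in {ω : ℝ | ε < |ω|}, g (ω + y) / ω)
      (nhdsWithin 0 (Set.Ioi 0)) (nhds P)) :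
    Tendsto (fun x : ℝ => ∫ ω : ℝ, (g ω : ℂ) / ((x + Complex.I * y) - Complex.I * ω))
      (nhdsWithin 0 (Set.Ioi 0)) (nhds ((Real.pi * g y : ℝ) + Complex.I * P)) := by
  have hC0 : 0 ≤ C := le_trans (abs_nonneg (g 0 - g 1)) (by simpa using hHolder 0 1)
  have hgcont : Continuous g := holderCont g C α hC0 hα hHolder
  set h : ℝ → ℝ := fun ω => g (ω + y) with hhdef
  have hhcont : Continuous h := hgcont.comp (continuous_id.add continuous_const)
  have hhint : Integrable h := hint.comp_add_right y
  have hhpos : ∀ ω, 0 ≤ h ω := fun ω => hpos _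
  have hhbdd : ∀ ω, h ω ≤ M := fun ω => hbdd _
  have hh0 : h 0 = g y := by show g (0 + y) = g y; rw [zero_add]
  have hH : ∀ ω : ℝ, |h ω - h 0| ≤ C * |ω| ^ α := by
    intro ω
    rw [hh0]
    show |g (ω + y) - g y| ≤ _
    simpa using hHolder (ω + y) y
  have hre := realPart h hhcont M hhpos hhbdd
  rw [hh0] at hre
  have him := imagPart h hhcont hhint C α hC0 hα hα1 hH P hpv
  -- integrability of the two real integrands for x > 0
  have hints : ∀ x : ℝ, 0 < x →
      Integrable (fun ω : ℝ => h ω * (x / (x ^ 2 + ω ^ 2)))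
        ∧ Integrable (fun ω : ℝ => h ω * (ω / (x ^ 2 + ω ^ 2))) := by
    intro x hx
    have hwcont : Continuous (fun ω : ℝ => ω / (x ^ 2 + ω ^ 2)) :=
      continuous_id.div (by continuity) (fun ω => by positivity)
    have hvcont : Continuous (fun ω : ℝ => x / (x ^ 2 + ω ^ 2)) :=
      continuous_const.div (by continuity) (fun ω => by positivity)
    have hwbound : ∀ ω : ℝ, |ω / (x ^ 2 + ω ^ 2)| ≤ (2 * x)⁻¹ := by
      intro ω
      have hpos2 : (0:ℝ) < x ^ 2 + ω ^ 2 := by positivity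
      rw [abs_div, abs_of_pos hpos2, div_le_iff₀ hpos2, inv_mul_eq_div,
        le_div_iff₀ (by positivity)]
      nlinarith [sq_nonneg (x - |ω|), _root_.sq_abs ω]
    have hvbound : ∀ ω : ℝ, |x / (x ^ 2 + ω ^ 2)| ≤ x⁻¹ := by
      intro ω
      have hpos2 : (0:ℝ) < x ^ 2 + ω ^ 2 := by positivity
      rw [abs_div, abs_of_pos hpos2, abs_of_pos hx, div_le_iff₀ hpos2]
      have hx2 : x ^ 2 ≤ x ^ 2 + ω ^ 2 := by nlinarith [sq_nonneg ω]
      calc x = x⁻¹ * x ^ 2 := by field_simp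
        _ ≤ x⁻¹ * (x ^ 2 + ω ^ 2) := by
            exact mul_le_mul_of_nonneg_left hx2 (by positivity)
    constructor
    · have := Integrable.bdd_mul (c := x⁻¹) hhint hvcont.aestronglyMeasurable
        (Eventually.of_forall fun ω => by rw [Real.norm_eq_abs]; exact hvbound ω)
      simpa [mul_comm] using this
    · have := Integrable.bdd_mul (c := (2 * x)⁻¹) hhint hwcont.aestronglyMeasurable
        (Eventually.of_forall fun ω => by rw [Real.norm_eq_abs]; exact hwbound ω)
      simpa [mul_comm] using this
  have key : ∀ x : ℝ, 0 < x →
      (∫ ω : ℝ, (g ω : ℂ) / ((x + Complex.I * y) - Complex.I * ω))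
        = ((∫ ω : ℝ, h ω * (x / (x ^ 2 + ω ^ 2)) : ℝ) : ℂ)
          + Complex.I * ((∫ ω : ℝ, h ω * (ω / (x ^ 2 + ω ^ 2)) : ℝ) : ℂ) := by
    intro x hx
    obtain ⟨int1, int2⟩ := hints x hx
    calc (∫ ω : ℝ, (g ω : ℂ) / ((x + Complex.I * y) - Complex.I * ω))
        = ∫ ω : ℝ, (g (ω + y) : ℂ) / ((x + Complex.I * y) - Complex.I * ((ω + y : ℝ) : ℂ)) :=
          (integral_add_right_eq_self
            (fun ω : ℝ => (g ω : ℂ) / ((x + Complex.I * y) - Complex.I * ω)) y).symm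
      _ = ∫ ω : ℝ, (((h ω * (x / (x ^ 2 + ω ^ 2)) : ℝ) : ℂ)
            + Complex.I * ((h ω * (ω / (x ^ 2 + ω ^ 2)) : ℝ) : ℂ)) := by
          refine integral_congr_ae (Eventually.of_forall fun ω => ?_)
          show (g (ω + y) : ℂ) / ((x + Complex.I * y) - Complex.I * ((ω + y : ℝ) : ℂ)) = _
          have hden : ((x : ℂ) + Complex.I * y) - Complex.I * ((ω + y : ℝ) : ℂ)
              = (x : ℂ) - Complex.I * ω := by
            push_cast; ring
          rw [hden]
          exact cplxSplit x ω (h ω) hx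
      _ = (∫ ω : ℝ, ((h ω * (x / (x ^ 2 + ω ^ 2)) : ℝ) : ℂ))
            + ∫ ω : ℝ, Complex.I * ((h ω * (ω / (x ^ 2 + ω ^ 2)) : ℝ) : ℂ) := by
          have hA : Integrable (fun ω : ℝ => ((h ω * (x / (x ^ 2 + ω ^ 2)) : ℝ) : ℂ)) :=
            int1.ofReal
          have hB : Integrable (fun ω : ℝ => ((h ω * (ω / (x ^ 2 + ω ^ 2)) : ℝ) : ℂ)) :=
            int2.ofReal
          exact integral_add hA (hB.const_mul Complex.I)
      _ = ((∫ ω : ℝ, h ω * (x / (x ^ 2 + ω ^ 2)) : ℝ) : ℂ)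
            + Complex.I * ((∫ ω : ℝ, h ω * (ω / (x ^ 2 + ω ^ 2)) : ℝ) : ℂ) := by
          have e1 : (∫ ω : ℝ, ((h ω * (x / (x ^ 2 + ω ^ 2)) : ℝ) : ℂ))
              = ((∫ ω : ℝ, h ω * (x / (x ^ 2 + ω ^ 2)) : ℝ) : ℂ) := integral_ofReal
          have e2 : (∫ ω : ℝ, ((h ω * (ω / (x ^ 2 + ω ^ 2)) : ℝ) : ℂ))
              = ((∫ ω : ℝ, h ω * (ω / (x ^ 2 + ω ^ 2)) : ℝ) : ℂ) := integral_ofReal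
          rw [integral_const_mul, e1, e2]
  have hfinal := ((Complex.continuous_ofReal.tendsto _).comp hre).add
    (((Complex.continuous_ofReal.tendsto _).comp him).const_mul Complex.I)
  refine Tendsto.congr' ?_ hfinal
  filter_upwards [self_mem_nhdsWithin] with x hx
  exact (key x hx).symm
end

section
/- Let g be a bounded continuous integrable probability density and W ∈ L²([0,1]²) symmetric. Suppose ν ≠ 0 is an eigenvalue of the integral operator W[f](x) = ∫₀¹ W(x,y) f(y) dy with eigenfunction V ∈ L²([0,1]), and λ ∈ ℂ with Re λ > 0 satisfies G(λ) = 1/(Kν), where G(λ) = ∫_ℝ (1/(λ−iω) − 1/(λ+1−iω)) g(ω) dω. Then the function v(ξ,η,x) = D(λ,ξ,η) V(x), with D(λ,ξ,η) = ∫_ℝ ( 1/(λ−iω) − e^{−ξ}/(λ+1−iω) ) e^{iηω} g(ω) dω, satisfies the eigenvalue equation ∂_ξ v + ∂_η v + K(1−e^{−ξ}) ĝ(η) ∫₀¹ W(x,y) v(0,0,y) dy = λ v, where ĝ(η) = ∫ e^{iηω} g(ω) dω. -/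
open MeasureTheory Complex

theorem aux_deriv_stmt19 (g : ℝ → ℝ) (hint : Integrable g) (hpos : ∀ ω, 0 ≤ g ω) (hcont : Continuous g)
    (ghat : ℝ → ℂ)
    (hghat : ∀ η, ghat η = ∫ ω : ℝ, Complex.exp (Complex.I * η * ω) * (g ω : ℂ))
    (μ : ℂ) (hμ : 0 < μ.re) (η' : ℝ) :
    Integrable (fun ω : ℝ => (1/(μ - Complex.I*ω)) * Complex.exp (Complex.I*η'*ω) * (g ω:ℂ)) ∧
    HasDerivAt (fun t : ℝ => ∫ ω:ℝ, (1/(μ - Complex.I*ω)) * Complex.exp (Complex.I*t*ω) * (g ω:ℂ))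
      (μ * (∫ ω:ℝ, (1/(μ - Complex.I*ω)) * Complex.exp (Complex.I*η'*ω) * (g ω:ℂ)) - ghat η') η' := by
  have hz : ∀ ω:ℝ, (μ - Complex.I*ω).re = μ.re := by intro ω; simp
  have hzne : ∀ ω:ℝ, μ - Complex.I*ω ≠ 0 := by
    intro ω h
    have h2 := hz ω
    rw [h] at h2
    simp at h2
    exact absurd h2.symm (ne_of_gt hμ)
  have hinv : ∀ ω:ℝ, ‖1/(μ - Complex.I*ω)‖ ≤ 1/μ.re := by
    intro ω
    rw [norm_div, norm_one]
    refine one_div_le_one_div_of_le hμ ?_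
    calc μ.re = (μ - Complex.I*ω).re := (hz ω).symm
      _ ≤ ‖μ - Complex.I*ω‖ := Complex.re_le_norm _
  have hexpnorm : ∀ (s t : ℝ), ‖Complex.exp (Complex.I*s*t)‖ = 1 := by
    intro s t
    rw [Complex.norm_exp]
    simp
  have hcontz : Continuous fun ω:ℝ => μ - Complex.I*ω := by continuity
  have hid : ∀ ω:ℝ, Complex.I*ω/(μ - Complex.I*ω) = μ/(μ - Complex.I*ω) - 1 := by
    intro ω
    rw [div_sub_one (hzne ω)]
    congr 1
    ring
  have hmeas : ∀ t : ℝ, AEStronglyMeasurable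
      (fun ω : ℝ => (1/(μ - Complex.I*ω)) * Complex.exp (Complex.I*t*ω)) volume := by
    intro t
    exact ((continuous_const.div hcontz hzne).mul (by continuity)).aestronglyMeasurable
  have hFint : ∀ t : ℝ, Integrable
      (fun ω : ℝ => (1/(μ - Complex.I*ω)) * Complex.exp (Complex.I*t*ω) * (g ω:ℂ)) := by
    intro t
    refine hint.ofReal.bdd_mul (hmeas t) (c := 1/μ.re) (Filter.Eventually.of_forall fun ω => ?_)
    rw [norm_mul, hexpnorm, mul_one]
    exact hinv ω
  have hexpint : ∀ t : ℝ, Integrable (fun ω : ℝ => Complex.exp (Complex.I*t*ω) * (g ω:ℂ)) := by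
    intro t
    exact hint.ofReal.bdd_mul (Continuous.aestronglyMeasurable (by continuity : Continuous fun ω:ℝ => Complex.exp (Complex.I*t*ω))) (c := 1) (Filter.Eventually.of_forall fun ω => le_of_eq (hexpnorm t ω))
  refine ⟨hFint η', ?_⟩
  have hder := hasDerivAt_integral_of_dominated_loc_of_deriv_le (𝕜 := ℝ) (μ := volume) (x₀ := η')
    (F := fun t ω => (1/(μ - Complex.I*ω)) * Complex.exp (Complex.I*t*ω) * (g ω:ℂ))
    (F' := fun t ω => (Complex.I*ω/(μ - Complex.I*ω)) * Complex.exp (Complex.I*t*ω) * (g ω:ℂ))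
    (bound := fun ω => (‖μ‖ * (1/μ.re) + 1) * g ω) (Metric.ball_mem_nhds η' one_pos)
    (Filter.Eventually.of_forall fun t => ((hmeas t).mul hint.ofReal.aestronglyMeasurable))
    (hFint η')
    ?meas' ?bnd ?bint ?diff
  case meas' =>
    exact (((continuous_const.mul Complex.continuous_ofReal).div hcontz hzne).mul
      (by continuity)).aestronglyMeasurable.mul hint.ofReal.aestronglyMeasurable
  case bnd =>
    refine Filter.Eventually.of_forall fun ω => fun t _ => ?_
    show ‖(Complex.I*ω/(μ - Complex.I*ω)) * Complex.exp (Complex.I*t*ω) * (g ω:ℂ)‖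
      ≤ (‖μ‖ * (1/μ.re) + 1) * g ω
    rw [norm_mul, norm_mul, hexpnorm, mul_one, Complex.norm_real, Real.norm_eq_abs,
      _root_.abs_of_nonneg (hpos ω), hid ω]
    refine mul_le_mul_of_nonneg_right ?_ (hpos ω)
    calc ‖μ/(μ - Complex.I*ω) - 1‖ ≤ ‖μ/(μ - Complex.I*ω)‖ + ‖(1:ℂ)‖ := norm_sub_le _ _
      _ ≤ ‖μ‖ * (1/μ.re) + 1 := by
          rw [norm_one]
          gcongr
          calc ‖μ/(μ - Complex.I*ω)‖ = ‖μ‖ * ‖1/(μ - Complex.I*ω)‖ := by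
                rw [← norm_mul]; ring_nf
            _ ≤ ‖μ‖ * (1/μ.re) := by gcongr; exact hinv ω
  case bint => exact (hint.const_mul _)
  case diff =>
    refine Filter.Eventually.of_forall fun ω => fun t _ => ?_
    have h0 : HasDerivAt (fun s:ℝ => (Complex.I*ω) * (s:ℂ)) (Complex.I*ω) t := by
      simpa using (Complex.ofRealCLM.hasDerivAt (x := t)).const_mul (Complex.I*(ω:ℂ))
    have h1 := (h0.cexp.const_mul (1/(μ - Complex.I*ω))).mul_const ((g ω : ℂ))
    have hfn : (fun s:ℝ => (1/(μ - Complex.I*ω)) * Complex.exp (Complex.I*ω*s) * (g ω:ℂ))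
        = fun s:ℝ => (1/(μ - Complex.I*ω)) * Complex.exp (Complex.I*s*ω) * (g ω:ℂ) := by
      funext s; ring_nf
    rw [hfn] at h1
    have hval : 1/(μ - Complex.I*ω) * (Complex.exp (Complex.I*ω*t) * (Complex.I*ω)) * (g ω:ℂ)
        = (Complex.I*ω/(μ - Complex.I*ω)) * Complex.exp (Complex.I*t*ω) * (g ω:ℂ) := by
      ring_nf
    rw [hval] at h1
    exact h1
  obtain ⟨-, hder⟩ := hder
  have hval2 : (∫ ω:ℝ, (Complex.I*ω/(μ - Complex.I*ω)) * Complex.exp (Complex.I*η'*ω) * (g ω:ℂ))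
      = μ * (∫ ω:ℝ, (1/(μ - Complex.I*ω)) * Complex.exp (Complex.I*η'*ω) * (g ω:ℂ)) - ghat η' := by
    have hpt : ∀ ω:ℝ, (Complex.I*ω/(μ - Complex.I*ω)) * Complex.exp (Complex.I*η'*ω) * (g ω:ℂ)
        = μ * ((1/(μ - Complex.I*ω)) * Complex.exp (Complex.I*η'*ω) * (g ω:ℂ))
          - Complex.exp (Complex.I*η'*ω) * (g ω:ℂ) := by
      intro ω
      rw [hid ω]
      ring
    rw [integral_congr_ae (Filter.Eventually.of_forall hpt),
      integral_sub ((hFint η').const_mul μ) (hexpint η'), integral_const_mul, hghat]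
  rwa [hval2] at hder


theorem stmt_19 (g : ℝ → ℝ) (hpos : ∀ ω, 0 ≤ g ω) (hbdd : ∃ M, ∀ ω, g ω ≤ M)
    (hcont : Continuous g) (hint : Integrable g) (hprob : ∫ ω, g ω = 1)
    (W : ℝ × ℝ → ℝ)
    (hWL2 : MemLp W 2 (volume.restrict (Set.Icc 0 1 ×ˢ Set.Icc 0 1)))
    (hWsym : ∀ x y, W (x, y) = W (y, x))
    (ν : ℝ) (hν : ν ≠ 0) (K : ℝ) (hK : K ≠ 0)
    (V : ℝ → ℂ) (hVL2 : MemLp V 2 (volume.restrict (Set.Icc 0 1)))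
    (hEig : ∀ x ∈ Set.Icc (0 : ℝ) 1,
      (∫ y in (0 : ℝ)..1, (W (x, y) : ℂ) * V y) = (ν : ℂ) * V x)
    (lam : ℂ) (hlam : 0 < lam.re)
    (G : ℂ → ℂ)
    (hG : ∀ z : ℂ, G z =
      ∫ ω : ℝ, (1 / (z - Complex.I * ω) - 1 / (z + 1 - Complex.I * ω)) * (g ω : ℂ))
    (hroot : G lam = 1 / (K * ν))
    (ghat : ℝ → ℂ)
    (hghat : ∀ η, ghat η = ∫ ω : ℝ, Complex.exp (Complex.I * η * ω) * (g ω : ℂ))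
    (D : ℝ → ℝ → ℂ)
    (hD : ∀ ξ η, D ξ η = ∫ ω : ℝ,
      (1 / (lam - Complex.I * ω) - Real.exp (-ξ) / (lam + 1 - Complex.I * ω)) *
        Complex.exp (Complex.I * η * ω) * (g ω : ℂ))
    (v : ℝ → ℝ → ℝ → ℂ) (hv : ∀ ξ η x, v ξ η x = D ξ η * V x) :
    ∀ ξ η : ℝ, ∀ x ∈ Set.Icc (0 : ℝ) 1,
      DifferentiableAt ℝ (fun ξ' => v ξ' η x) ξ ∧
      DifferentiableAt ℝ (fun η' => v ξ η' x) η ∧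
      deriv (fun ξ' => v ξ' η x) ξ + deriv (fun η' => v ξ η' x) η +
        K * (1 - Real.exp (-ξ)) * ghat η * ∫ y in (0 : ℝ)..1, (W (x, y) : ℂ) * v 0 0 y =
        lam * v ξ η x := by
  intro ξ η x hx
  -- abbreviations
  set A : ℝ → ℂ := fun t => ∫ ω:ℝ, (1/(lam - Complex.I*ω)) * Complex.exp (Complex.I*t*ω) * (g ω:ℂ) with hA
  set B : ℝ → ℂ := fun t => ∫ ω:ℝ, (1/(lam + 1 - Complex.I*ω)) * Complex.exp (Complex.I*t*ω) * (g ω:ℂ) with hB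
  have hlam1 : 0 < (lam + 1).re := by simp; linarith
  have hmain1 := fun t => aux_deriv_stmt19 g hint hpos hcont ghat hghat lam hlam t
  have hmain2' := fun t => aux_deriv_stmt19 g hint hpos hcont ghat hghat (lam + 1) hlam1 t
  -- D splits
  have hsplit : ∀ ξ' η' : ℝ, D ξ' η' = A η' - (Real.exp (-ξ') : ℂ) * B η' := by
    intro ξ' η'
    rw [hD]
    have hpt : ∀ ω:ℝ, (1 / (lam - Complex.I * ω) - (Real.exp (-ξ') : ℂ) / (lam + 1 - Complex.I * ω)) *
        Complex.exp (Complex.I * η' * ω) * (g ω : ℂ)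
        = (1/(lam - Complex.I*ω)) * Complex.exp (Complex.I*η'*ω) * (g ω:ℂ)
          - (Real.exp (-ξ') : ℂ) * ((1/(lam + 1 - Complex.I*ω)) * Complex.exp (Complex.I*η'*ω) * (g ω:ℂ)) := by
      intro ω; ring
    rw [integral_congr_ae (Filter.Eventually.of_forall hpt),
      integral_sub (hmain1 η').1 (((hmain2' η').1).const_mul _), integral_const_mul]
  -- derivative in ξ
  have hE : HasDerivAt (fun ξ' : ℝ => ((Real.exp (-ξ') : ℝ) : ℂ)) (((Real.exp (-ξ) * (-1) : ℝ)) : ℂ) ξ := by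
    exact ((Real.hasDerivAt_exp (-ξ)).comp ξ (hasDerivAt_neg ξ)).ofReal_comp
  have hdξ : HasDerivAt (fun ξ' => v ξ' η x)
      (((Real.exp (-ξ) : ℂ)) * B η * V x) ξ := by
    have h1 : (fun ξ' => v ξ' η x) = fun ξ' => (A η - ((Real.exp (-ξ') : ℝ) : ℂ) * B η) * V x := by
      funext ξ'; rw [hv, hsplit]
    rw [h1]
    have h2 := ((hasDerivAt_const ξ (A η)).sub (hE.mul_const (B η))).mul_const (V x)
    have h3 : (0 - ((Real.exp (-ξ) * (-1) : ℝ) : ℂ) * B η) * V x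
        = ((Real.exp (-ξ) : ℂ)) * B η * V x := by push_cast; ring
    rwa [h3] at h2
  -- derivative in η
  have hdη : HasDerivAt (fun η' => v ξ η' x)
      (((lam * A η - ghat η) - (Real.exp (-ξ) : ℂ) * ((lam + 1) * B η - ghat η)) * V x) η := by
    have h1 : (fun η' => v ξ η' x) = fun η' => (A η' - ((Real.exp (-ξ) : ℝ) : ℂ) * B η') * V x := by
      funext η'; rw [hv, hsplit]
    rw [h1]
    exact ((hmain1 η).2.sub (((hmain2' η).2).const_mul _)).mul_const (V x)
  -- value of D 0 0
  have hD00 : D 0 0 = 1 / ((K : ℂ) * (ν : ℂ)) := by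
    have h1 : D 0 0 = G lam := by
      rw [hD, hG]
      refine integral_congr_ae (Filter.Eventually.of_forall fun ω => ?_)
      norm_num
    rw [h1, hroot]
  -- the coupling integral
  have hcoup : (∫ y in (0:ℝ)..1, (W (x, y) : ℂ) * v 0 0 y) = D 0 0 * ((ν : ℂ) * V x) := by
    have h1 : (∫ y in (0:ℝ)..1, (W (x, y) : ℂ) * v 0 0 y)
        = ∫ y in (0:ℝ)..1, D 0 0 * ((W (x, y) : ℂ) * V y) := by
      refine intervalIntegral.integral_congr fun y _ => ?_
      rw [hv]; ring
    rw [h1, intervalIntegral.integral_const_mul, hEig x hx]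
  refine ⟨hdξ.differentiableAt, hdη.differentiableAt, ?_⟩
  rw [hdξ.deriv, hdη.deriv, hcoup, hD00, hv, hsplit]
  have hKc : (K : ℂ) ≠ 0 := Complex.ofReal_ne_zero.mpr hK
  have hνc : (ν : ℂ) ≠ 0 := Complex.ofReal_ne_zero.mpr hν
  push_cast
  field_simp
  ring
end
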